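/- arXiv:1203.4530 — 4 statements merged into one kernel-verified Lean document; each statement's English description precedes it below -/
import Mathlib

section
/- Let H be a complex Hilbert space, G a group, and U a unitary representation of G on H. Let A be a directed (partially ordered) index set and (G_α)_{α∈A} a monotone family of finite subgroups of G (α ≤ β implies G_α ⊆ G_β) whose union is all of G. Let E denote the orthogonal projection of H onto the closed subspace {ξ ∈ H : U(g)ξ = ξ for all g ∈ G}. Then for every ξ ∈ H, the net α ↦ (1/|G_α|) Σ_{g∈G_α} U(g)ξ converges in norm to Eξ; that is, the averages (1/|G_α|) Σ_{g∈G_α} U(g) converge to E in the strong operator topology. -/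
open Filter Topology

/-- **Mean ergodic theorem for directed unions of finite subgroups.**
Let `H` be a complex Hilbert space, `G` a group and `U` a unitary representation of `G` on `H`
(a group homomorphism into continuous linear maps preserving the inner product).  Let `A` be a
directed partially ordered set and `Gs : A → Subgroup G` a monotone family of finite subgroups
whose union is all of `G`.  Then for every `ξ : H` the net of averages
`α ↦ (1/|Gs α|) Σ_{g ∈ Gs α} U g ξ` converges in norm to `E ξ`, where `E` is the orthogonal
projection onto the closed subspace of `G`-invariant vectors; equivalently, the limit `η`
is `G`-invariant and `ξ - η` is orthogonal to every `G`-invariant vector. -/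
theorem symmetric_average_tendsto_invariant_projection
    {H : Type*} [NormedAddCommGroup H] [InnerProductSpace ℂ H] [CompleteSpace H]
    {G : Type*} [Group G] (U : G →* (H →L[ℂ] H))
    (hU : ∀ (g : G) (x y : H), (inner ℂ (U g x) (U g y) : ℂ) = inner ℂ x y)
    {A : Type*} [PartialOrder A] [IsDirected A (· ≤ ·)] [Nonempty A]
    (Gs : A → Subgroup G) (hfin : ∀ α : A, (Gs α : Set G).Finite)
    (hmono : ∀ ⦃α β : A⦄, α ≤ β → Gs α ≤ Gs β)
    (hcover : ∀ g : G, ∃ α : A, g ∈ Gs α) (ξ : H) :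
    ∃ η : H,
      (∀ g : G, U g η = η) ∧
      (∀ ζ : H, (∀ g : G, U g ζ = ζ) → (inner ℂ (ξ - η) ζ : ℂ) = 0) ∧
      Tendsto (fun α : A => (((hfin α).toFinset.card : ℂ))⁻¹ • ∑ g ∈ (hfin α).toFinset, U g ξ)
        atTop (𝓝 η) := by
  classical
  -- `U g⁻¹` is a two-sided inverse of `U g`
  have hUinv : ∀ (g : G) (y : H), U g (U g⁻¹ y) = y := by
    intro g y
    have h1 : U g * U g⁻¹ = 1 := by rw [← map_mul, mul_inv_cancel, map_one]
    have h2 : (U g * U g⁻¹) y = U g (U g⁻¹ y) := rfl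
    rw [h1] at h2
    exact h2.symm
  -- `U g` is isometric
  have hnorm : ∀ (g : G) (x : H), ‖U g x‖ = ‖x‖ := by
    intro g x
    have h := hU g x x
    rw [@inner_self_eq_norm_sq_to_K ℂ, @inner_self_eq_norm_sq_to_K ℂ] at h
    have h2 : (‖U g x‖ : ℝ) ^ 2 = ‖x‖ ^ 2 := by exact_mod_cast h
    nlinarith [norm_nonneg (U g x), norm_nonneg x]
  -- the subspace of invariant vectors
  set K : Submodule ℂ H :=
    { carrier := {x : H | ∀ g : G, U g x = x}
      add_mem' := fun ha hb g => by rw [map_add, ha g, hb g]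
      zero_mem' := fun g => map_zero (U g)
      smul_mem' := fun c x hx g => by rw [map_smul, hx g] } with hKdef
  have hKmem : ∀ x : H, x ∈ K ↔ ∀ g : G, U g x = x := fun x => Iff.rfl
  have hKclosed : IsClosed (K : Set H) := by
    have : (K : Set H) = ⋂ g : G, {x : H | U g x = x} := by
      ext x; simp [hKmem, Set.mem_iInter]
    rw [this]
    exact isClosed_iInter fun g => isClosed_eq (U g).continuous continuous_id
  haveI : CompleteSpace K := hKclosed.completeSpace_coe
  -- the set of "coboundaries"
  set M : Set H := {y : H | ∃ (g : G) (x : H), y = x - U g x} with hMdef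
  -- K is the orthogonal complement of the span of M
  have hKM : (Submodule.span ℂ M)ᗮ = K := by
    ext ζ
    constructor
    · intro hζ
      rw [hKmem]
      intro g
      have key : ∀ x : H, (inner ℂ x (ζ - U g⁻¹ ζ) : ℂ) = 0 := by
        intro x
        have h0 : (inner ℂ (x - U g x) ζ : ℂ) = 0 := by
          have : (x - U g x) ∈ Submodule.span ℂ M :=
            Submodule.subset_span ⟨g, x, rfl⟩
          exact (Submodule.mem_orthogonal _ _).1 hζ _ this
        have h1 : (inner ℂ (U g x) ζ : ℂ) = inner ℂ x (U g⁻¹ ζ) := by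
          calc (inner ℂ (U g x) ζ : ℂ) = inner ℂ (U g x) (U g (U g⁻¹ ζ)) := by rw [hUinv]
            _ = inner ℂ x (U g⁻¹ ζ) := hU g x (U g⁻¹ ζ)
        rw [inner_sub_left, h1, sub_eq_zero] at h0
        rw [inner_sub_right, h0, sub_self]
      have : ζ - U g⁻¹ ζ = 0 := by
        have := key (ζ - U g⁻¹ ζ)
        rwa [inner_self_eq_zero] at this
      have hfix : U g⁻¹ ζ = ζ := by
        rw [sub_eq_zero] at this; exact this.symm
      calc U g ζ = U g (U g⁻¹ ζ) := by rw [hfix]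
        _ = ζ := hUinv g ζ
    · intro hζ
      rw [Submodule.mem_orthogonal]
      intro v hv
      induction hv using Submodule.span_induction with
      | mem x hx =>
        obtain ⟨g, x, rfl⟩ := hx
        rw [inner_sub_left, sub_eq_zero]
        calc (inner ℂ x ζ : ℂ) = inner ℂ (U g x) (U g ζ) := (hU g x ζ).symm
          _ = inner ℂ (U g x) ζ := by rw [hζ g]
      | zero => simp
      | add x y hx hy ihx ihy => rw [inner_add_left, ihx, ihy, add_zero]
      | smul a x hx ihx => rw [inner_smul_left, ihx, mul_zero]
  -- the candidate limit
  set η : H := (K.orthogonalProjectionOnto ξ : H) with hηdef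
  have hηK : η ∈ K := (K.orthogonalProjectionOnto ξ).2
  have hψ : ξ - η ∈ Kᗮ := K.sub_starProjection_mem_orthogonal ξ
  set ψ : H := ξ - η with hψdef
  -- ψ lies in the closure of the span of M
  have hψclos : ψ ∈ closure (Submodule.span ℂ M : Set H) := by
    have h1 : Kᗮ = (Submodule.span ℂ M).topologicalClosure := by
      rw [← hKM, Submodule.orthogonal_orthogonal_eq_closure]
    have := h1 ▸ hψ
    rwa [← Submodule.topologicalClosure_coe]
  -- the averaging operators
  set T : A → H → H := fun α v =>
    (((hfin α).toFinset.card : ℂ))⁻¹ • ∑ g ∈ (hfin α).toFinset, U g v with hTdef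
  have hmemfin : ∀ (α : A) (g : G), g ∈ (hfin α).toFinset ↔ g ∈ Gs α := by
    intro α g; rw [Set.Finite.mem_toFinset]; rfl
  have hcardpos : ∀ α : A, 0 < (hfin α).toFinset.card := by
    intro α
    exact Finset.card_pos.2 ⟨1, (hmemfin α 1).2 (one_mem _)⟩
  have hcardne : ∀ α : A, ((hfin α).toFinset.card : ℂ) ≠ 0 := by
    intro α
    exact_mod_cast Nat.cast_ne_zero.2 (hcardpos α).ne'
  -- T is additive
  have hTadd : ∀ (α : A) (v w : H), T α (v + w) = T α v + T α w := by
    intro α v w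
    simp only [hTdef, map_add, Finset.sum_add_distrib, smul_add]
  -- T fixes invariant vectors
  have hTfix : ∀ (α : A) (v : H), (∀ g : G, U g v = v) → T α v = v := by
    intro α v hv
    simp only [hTdef]
    rw [Finset.sum_congr rfl fun g _ => hv g, Finset.sum_const, ← Nat.cast_smul_eq_nsmul ℂ,
      smul_smul, inv_mul_cancel₀ (hcardne α), one_smul]
  -- T is a contraction
  have hTnorm : ∀ (α : A) (v : H), ‖T α v‖ ≤ ‖v‖ := by
    intro α v
    have hsum : ‖∑ g ∈ (hfin α).toFinset, U g v‖ ≤ ((hfin α).toFinset.card : ℝ) * ‖v‖ := by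
      refine (norm_sum_le _ _).trans ?_
      rw [Finset.sum_congr rfl fun g _ => hnorm g v, Finset.sum_const, nsmul_eq_mul]
    have hc0 : (0:ℝ) < ((hfin α).toFinset.card : ℝ) := by
      exact_mod_cast hcardpos α
    have hnc : ‖(((hfin α).toFinset.card : ℂ))⁻¹‖ = (((hfin α).toFinset.card : ℝ))⁻¹ := by
      rw [norm_inv]
      norm_num
    have heq : ‖T α v‖ = ‖(((hfin α).toFinset.card : ℂ))⁻¹‖ * ‖∑ g ∈ (hfin α).toFinset, U g v‖ := by
      rw [hTdef]
      exact norm_smul _ _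
    have h2 : (((hfin α).toFinset.card : ℝ))⁻¹ * ‖∑ g ∈ (hfin α).toFinset, U g v‖
        ≤ (((hfin α).toFinset.card : ℝ))⁻¹ * (((hfin α).toFinset.card : ℝ) * ‖v‖) :=
      mul_le_mul_of_nonneg_left hsum (inv_nonneg.2 (Nat.cast_nonneg _))
    rw [heq, hnc]
    refine h2.trans ?_
    rw [← mul_assoc, inv_mul_cancel₀ hc0.ne', one_mul]
  -- T eventually kills elements of the span of M
  have hTspan : ∀ v ∈ Submodule.span ℂ M, ∀ᶠ α in (atTop : Filter A), T α v = 0 := by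
    intro v hv
    induction hv using Submodule.span_induction with
    | mem y hy =>
      obtain ⟨g, x, rfl⟩ := hy
      obtain ⟨α₀, hα₀⟩ := hcover g
      filter_upwards [eventually_ge_atTop α₀] with β hβ
      have hg : g ∈ Gs β := hmono hβ hα₀
      have hsum : ∑ h ∈ (hfin β).toFinset, U h (U g x) = ∑ h ∈ (hfin β).toFinset, U h x := by
        have : ∀ h : G, U h (U g x) = U (h * g) x := by
          intro h
          rw [map_mul]
          rfl
        rw [Finset.sum_congr rfl fun h _ => this h]
        refine Finset.sum_nbij' (fun h => h * g) (fun h => h * g⁻¹) ?_ ?_ ?_ ?_ ?_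
        · intro h hh
          rw [hmemfin] at hh ⊢
          exact mul_mem hh hg
        · intro h hh
          rw [hmemfin] at hh ⊢
          exact mul_mem hh (inv_mem hg)
        · intro h _; simp
        · intro h _; simp
        · intro h _; rfl
      rw [hTdef]
      simp only [map_sub, Finset.sum_sub_distrib, hsum, sub_self, smul_zero]
    | zero =>
      filter_upwards with β
      simp only [hTdef, map_zero, Finset.sum_const_zero, smul_zero]
    | add x y hx hy ihx ihy =>
      filter_upwards [ihx, ihy] with β h1 h2
      rw [hTadd, h1, h2, add_zero]
    | smul a x hx ihx =>
      filter_upwards [ihx] with β h1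
      have : T β (a • x) = a • T β x := by
        simp only [hTdef, map_smul, ← Finset.smul_sum, smul_comm a]
      rw [this, h1, smul_zero]
  -- conclusion
  refine ⟨η, hηK, ?_, ?_⟩
  · intro ζ hζ
    have hζK : ζ ∈ K := hζ
    have := (Submodule.mem_orthogonal K ψ).1 hψ ζ hζK
    rw [← inner_conj_symm, this, map_zero]
  · rw [Metric.tendsto_nhds]
    intro ε hε
    obtain ⟨ψ', hψ'mem, hψ'close⟩ := Metric.mem_closure_iff.1 hψclos (ε / 2) (by linarith)
    have hev := hTspan ψ' hψ'mem
    filter_upwards [hev] with β hβ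
    have hξsplit : ξ = η + ψ := by rw [hψdef]; abel
    have hTξ : T β ξ = η + T β ψ := by
      rw [hξsplit, hTadd, hTfix β η hηK]
    have hdist : dist (T β ξ) η = ‖T β ψ‖ := by
      rw [hTξ, dist_eq_norm]
      simp
    have hsplit2 : T β ψ = T β (ψ - ψ') + T β ψ' := by
      have h9 : ψ - ψ' + ψ' = ψ := by abel
      rw [← hTadd, h9]
    have : ‖T β ψ‖ ≤ ‖ψ - ψ'‖ := by
      rw [hsplit2, hβ, add_zero]
      exact hTnorm β (ψ - ψ')
    have hlt : ‖T β ψ‖ < ε := by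
      have : ‖ψ - ψ'‖ < ε / 2 := by
        rw [← dist_eq_norm]; exact hψ'close
      linarith [this, ‹‖T β ψ‖ ≤ ‖ψ - ψ'‖›]
    show dist (T β ξ) η < ε
    rw [hdist]
    exact hlt
end

section
/- Let J be an infinite index set, A a unital C*-algebra, (a_j)_{j∈J} a CAR family over J in A, (α_g)_{g∈ℙ_J} a family of *-algebra automorphisms of A implementing the finite permutations of J, and Θ a parity automorphism of A. Then every symmetric state φ on A is even, i.e. φ ∘ Θ = φ; equivalently, φ vanishes on every element x with Θ(x) = −x. -/
open scoped ComplexOrder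

/-- A state on a unital C*-algebra: a linear functional with `φ 1 = 1` and `φ(x*x) ≥ 0`. -/
def IsState {A : Type*} [NormedRing A] [StarRing A] [CStarRing A] [NormedAlgebra ℂ A]
    [StarModule ℂ A] [CompleteSpace A] (φ : A →ₗ[ℂ] ℂ) : Prop :=
  φ 1 = 1 ∧ ∀ x : A, 0 ≤ φ (star x * x)

/-- A CAR family over `J` in `A`: a family satisfying the canonical anticommutation
relations and generating `A` as a closed *-subalgebra. -/
def IsCARFamily {J : Type*} {A : Type*} [NormedRing A] [StarRing A] [CStarRing A]
    [NormedAlgebra ℂ A] [StarModule ℂ A] [CompleteSpace A] (a : J → A) : Prop :=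
  (∀ j : J, star (a j) * a j + a j * star (a j) = 1) ∧
  (∀ j k : J, j ≠ k → star (a j) * a k + a k * star (a j) = 0) ∧
  (∀ j k : J, a j * a k + a k * a j = 0) ∧
  (StarAlgebra.adjoin ℂ (Set.range a)).topologicalClosure = ⊤

/-- A permutation moving only finitely many points. -/
def IsFinitePerm {J : Type*} (g : Equiv.Perm J) : Prop :=
  {j : J | g j ≠ j}.Finite



section StateLemmas

variable {A : Type*} [CStarAlgebra A]

lemma state_quad (φ : A →ₗ[ℂ] ℂ) (h1 : φ 1 = 1) (hpos : ∀ x : A, 0 ≤ φ (star x * x))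
    (x : A) (t : ℂ) :
    0 ≤ φ (star x * x) + t * φ (star x) + (starRingEnd ℂ) t * φ x + (starRingEnd ℂ) t * t := by
  have := hpos (x + t • 1)
  have hexp : star (x + t • 1) * (x + t • 1)
      = star x * x + t • star x + ((starRingEnd ℂ) t) • x + ((starRingEnd ℂ) t * t) • 1 := by
    simp only [star_add, star_smul, star_one, RCLike.star_def, add_mul, mul_add,
      smul_mul_assoc, mul_smul_comm, one_mul, mul_one, smul_smul, smul_add]
    rw [mul_comm t ((starRingEnd ℂ) t)]
    abel
  rw [hexp] at this
  simpa [map_add, map_smul, h1, mul_comm] using this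

lemma state_star_apply (φ : A →ₗ[ℂ] ℂ) (h1 : φ 1 = 1) (hpos : ∀ x : A, 0 ≤ φ (star x * x))
    (x : A) : φ (star x) = (starRingEnd ℂ) (φ x) := by
  have hp : 0 ≤ φ (star x * x) := hpos x
  have hpim : (φ (star x * x)).im = 0 := by
    rw [Complex.le_def] at hp; simpa using hp.2.symm
  have hq1 := state_quad φ h1 hpos x 1
  have hqi := state_quad φ h1 hpos x Complex.I
  rw [Complex.le_def] at hq1 hqi
  have h1' := hq1.2.symm
  have hi' := hqi.2.symm
  simp only [Complex.add_im, Complex.mul_im, Complex.one_re, Complex.one_im, map_one,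
    Complex.conj_I, Complex.I_re, Complex.I_im, Complex.neg_im, Complex.neg_re,
    Complex.mul_re, Complex.zero_im, hpim] at h1' hi'
  apply Complex.ext <;> simp only [Complex.conj_re, Complex.conj_im] <;> linarith [h1', hi']

lemma state_normSq_le (φ : A →ₗ[ℂ] ℂ) (h1 : φ 1 = 1) (hpos : ∀ x : A, 0 ≤ φ (star x * x))
    (x : A) : Complex.normSq (φ x) ≤ (φ (star x * x)).re := by
  have hq := state_quad φ h1 hpos x (-(φ x))
  rw [state_star_apply φ h1 hpos x] at hq
  have h2 : φ (star x * x) + (-(φ x)) * (starRingEnd ℂ) (φ x)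
      + (starRingEnd ℂ) (-(φ x)) * φ x + (starRingEnd ℂ) (-(φ x)) * (-(φ x))
      = φ (star x * x) - (φ x) * (starRingEnd ℂ) (φ x) := by
    simp only [map_neg]; ring
  rw [h2, Complex.mul_conj] at hq
  rw [Complex.le_def] at hq
  have := hq.1
  simp only [Complex.zero_re, Complex.sub_re, Complex.ofReal_re] at this
  linarith

end StateLemmas


section OrderLemmas

variable {A : Type*} [CStarAlgebra A] [PartialOrder A] [StarOrderedRing A]

lemma state_nonneg_of_nonneg (φ : A →ₗ[ℂ] ℂ) (hpos : ∀ x : A, 0 ≤ φ (star x * x))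
    {z : A} (hz : 0 ≤ z) : 0 ≤ φ z := by
  rw [StarOrderedRing.nonneg_iff] at hz
  induction hz using AddSubmonoid.closure_induction with
  | mem x hx => obtain ⟨s, rfl⟩ := hx; exact hpos s
  | zero => simp
  | add x y _ _ hx hy => rw [map_add]; exact add_nonneg hx hy

lemma state_mono (φ : A →ₗ[ℂ] ℂ) (hpos : ∀ x : A, 0 ≤ φ (star x * x))
    {z w : A} (hzw : z ≤ w) : φ z ≤ φ w := by
  rw [StarOrderedRing.le_iff] at hzw
  obtain ⟨c, hc, rfl⟩ := hzw
  have h0c : (0 : A) ≤ c := StarOrderedRing.nonneg_iff.mpr hc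
  have := state_nonneg_of_nonneg φ hpos h0c
  rw [map_add]
  exact le_add_of_nonneg_right this

lemma starAlgEquiv_map_closure (ψ : A ≃⋆ₐ[ℂ] A) {c : A}
    (hc : c ∈ AddSubmonoid.closure (Set.range fun s : A => star s * s)) :
    ψ c ∈ AddSubmonoid.closure (Set.range fun s : A => star s * s) := by
  induction hc using AddSubmonoid.closure_induction with
  | mem x hx =>
      obtain ⟨s, rfl⟩ := hx
      exact AddSubmonoid.subset_closure ⟨ψ s, by rw [map_mul, map_star]⟩
  | zero => simpa using zero_mem _
  | add x y _ _ hx hy => rw [map_add]; exact add_mem hx hy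

lemma starAlgEquiv_monotone (ψ : A ≃⋆ₐ[ℂ] A) : Monotone (ψ : A → A) := by
  intro z w hzw
  rw [StarOrderedRing.le_iff] at hzw ⊢
  obtain ⟨c, hc, rfl⟩ := hzw
  exact ⟨ψ c, starAlgEquiv_map_closure ψ hc, map_add ψ z c⟩

lemma state_apply_algebraMap (φ : A →ₗ[ℂ] ℂ) (h1 : φ 1 = 1) (r : ℝ) :
    φ (algebraMap ℝ A r) = (r : ℂ) := by
  rw [IsScalarTower.algebraMap_apply ℝ ℂ A, Algebra.algebraMap_eq_smul_one, map_smul, h1,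
    smul_eq_mul, mul_one]
  simp

lemma starAlgEquiv_apply_algebraMap (ψ : A ≃⋆ₐ[ℂ] A) (r : ℝ) :
    ψ (algebraMap ℝ A r) = algebraMap ℝ A r := by
  rw [IsScalarTower.algebraMap_apply ℝ ℂ A]
  exact AlgHomClass.commutes ψ _

end OrderLemmas


section SuperComm

variable {J : Type*} {A : Type*} [CStarAlgebra A] (a : J → A)

/-- The star subalgebra generated by the `a j`, `j ∈ F`. -/
noncomputable def carM (F : Set J) : StarSubalgebra ℂ A := StarAlgebra.adjoin ℂ (a '' F)

lemma mem_carM_iff {F : Set J} {x : A} :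
    x ∈ carM a F ↔ x ∈ Algebra.adjoin ℂ ((a '' F) ∪ star (a '' F)) := by
  rw [carM, ← StarAlgebra.adjoin_toSubalgebra]; rfl

variable (h2 : ∀ j k : J, j ≠ k → star (a j) * a k + a k * star (a j) = 0)
  (h3 : ∀ j k : J, a j * a k + a k * a j = 0)
  (Θ : A ≃⋆ₐ[ℂ] A) (hΘ : ∀ j : J, Θ (a j) = -(a j))

include h2 h3 hΘ in
/-- A generator with index outside `T` graded-commutes with everything in `carM a T`. -/
lemma gen_supercomm {T : Set J} {j : J} (hj : j ∉ T) {c : A} (hc : c ∈ carM a T) :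
    a j * c = Θ c * a j ∧ star (a j) * c = Θ c * star (a j) := by
  rw [mem_carM_iff] at hc
  induction hc using Algebra.adjoin_induction with
  | mem x hx =>
      rcases hx with hx | hx
      · obtain ⟨k, hk, rfl⟩ := hx
        have hjk : j ≠ k := fun h => hj (h ▸ hk)
        constructor
        · rw [hΘ k, neg_mul]
          exact eq_neg_of_add_eq_zero_left (h3 j k)
        · rw [hΘ k, neg_mul]
          exact eq_neg_of_add_eq_zero_left (h2 j k hjk)
      · rw [Set.mem_star] at hx
        obtain ⟨k, hk, hks⟩ := hx
        have hxk : x = star (a k) := by rw [hks, star_star]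
        subst hxk
        have hjk : j ≠ k := fun h => hj (h ▸ hk)
        have hΘs : Θ (star (a k)) = -(star (a k)) := by
          rw [map_star, hΘ k, star_neg]
        constructor
        · rw [hΘs, neg_mul]
          exact eq_neg_of_add_eq_zero_left (by rw [add_comm]; exact h2 k j hjk.symm)
        · rw [hΘs, neg_mul]
          have h0' := congrArg star (h3 k j)
          simp only [star_add, star_mul, star_zero] at h0'
          exact eq_neg_of_add_eq_zero_left h0'
  | algebraMap r =>
      constructor <;>
      · rw [AlgHomClass.commutes Θ r]
        exact (Algebra.commutes r _).symm
  | add x y hx hy ihx ihy =>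
      rw [map_add]
      exact ⟨by rw [mul_add, ihx.1, ihy.1, add_mul],
             by rw [mul_add, ihx.2, ihy.2, add_mul]⟩
  | mul x y hx hy ihx ihy =>
      rw [map_mul]
      constructor
      · rw [← mul_assoc, ihx.1, mul_assoc, ihy.1, ← mul_assoc]
      · rw [← mul_assoc, ihx.2, mul_assoc, ihy.2, ← mul_assoc]

include h2 h3 hΘ in
/-- Elements of `carM a F` graded-commute past elements of `carM a T` for disjoint `F`, `T`. -/
lemma supercomm {F T : Set J} (hFT : Disjoint F T) {b c : A}
    (hb : b ∈ carM a F) (hc : c ∈ carM a T) (hcodd : Θ c = -c) :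
    b * c = c * Θ b := by
  rw [mem_carM_iff] at hb
  induction hb using Algebra.adjoin_induction with
  | mem x hx =>
      have key : ∀ k ∈ F, a k * c = -(c * a k) ∧ star (a k) * c = -(c * star (a k)) := by
        intro k hk
        have hkT : k ∉ T := fun hmem => (hFT.ne_of_mem hk hmem) rfl
        have := gen_supercomm a h2 h3 Θ hΘ hkT hc
        rw [hcodd] at this
        simpa only [neg_mul, mul_neg] using this
      rcases hx with hx | hx
      · obtain ⟨k, hk, rfl⟩ := hx
        rw [(key k hk).1, hΘ k, mul_neg]
      · rw [Set.mem_star] at hx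
        obtain ⟨k, hk, hks⟩ := hx
        have hxk : x = star (a k) := by rw [hks, star_star]
        subst hxk
        rw [(key k hk).2, map_star, hΘ k, star_neg, mul_neg]
  | algebraMap r =>
      rw [AlgHomClass.commutes Θ r]
      exact Algebra.commutes r c
  | add x y hx hy ihx ihy => rw [map_add, add_mul, ihx, ihy, mul_add]
  | mul x y hx hy ihx ihy =>
      rw [map_mul, mul_assoc, ihy, ← mul_assoc, ihx, mul_assoc]

end SuperComm



lemma exists_perms {J : Type*} [Infinite J] (F : Finset J) (N : ℕ) :
    ∃ g : Fin N → Equiv.Perm J, (∀ i, IsFinitePerm (g i)) ∧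
      (∀ i k, i ≠ k → Disjoint ((g i) '' (F : Set J)) ((g k) '' (F : Set J))) := by
  classical
  set m := F.card with hm
  set v : Fin m → J := fun k => (F.equivFin.symm k : J) with hv
  have hvF : ∀ k, v k ∈ F := fun k => (F.equivFin.symm k).2
  have hvinj : Function.Injective v :=
    fun k k' h => F.equivFin.symm.injective (Subtype.ext h)
  have hvsurj : ∀ x ∈ F, ∃ k, v k = x := by
    intro x hx
    exact ⟨F.equivFin ⟨x, hx⟩, by simp [hv]⟩
  have hcompl : ((F : Set J)ᶜ).Infinite := F.finite_toSet.infinite_compl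
  haveI := hcompl.to_subtype
  set e : ℕ ↪ ((F : Set J)ᶜ : Set J) := Infinite.natEmbedding _ with he
  set w : Fin m → Fin N → J := fun k i => (e (k.val + m * i.val) : J) with hw
  have hwinj : ∀ k i k' i', w k i = w k' i' → k = k' ∧ i = i' := by
    intro k i k' i' h
    have h1 : e (k.val + m * i.val) = e (k'.val + m * i'.val) := Subtype.ext h
    have h2 : k.val + m * i.val = k'.val + m * i'.val := e.injective h1
    have hk : k.val = k'.val := by
      have := congrArg (· % m) h2
      simpa [Nat.add_mul_mod_self_left, Nat.mod_eq_of_lt k.isLt,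
        Nat.mod_eq_of_lt k'.isLt] using this
    have hi : i.val = i'.val := by
      have hmpos : 0 < m := lt_of_le_of_lt (Nat.zero_le _) k.isLt
      have := congrArg (· / m) h2
      simpa [hk, Nat.add_mul_div_left _ _ hmpos, Nat.div_eq_of_lt k'.isLt] using this
    exact ⟨Fin.ext hk, Fin.ext hi⟩
  have hwF : ∀ k i, w k i ∉ F := fun k i => (e (k.val + m * i.val)).2
  -- the involution swapping `v k` and `w k i`
  set t : Fin N → J → J := fun i x =>
    if h : ∃ k, v k = x then w (Classical.choose h) i
    else if h' : ∃ k, w k i = x then v (Classical.choose h') else x with ht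
  have ht1 : ∀ i k, t i (v k) = w k i := by
    intro i k
    have h : ∃ k', v k' = v k := ⟨k, rfl⟩
    simp only [ht, dif_pos h]
    rw [hvinj (Classical.choose_spec h)]
  have ht2 : ∀ i k, t i (w k i) = v k := by
    intro i k
    have h : ¬ ∃ k', v k' = w k i := by
      rintro ⟨k', hk'⟩; exact hwF k i (hk' ▸ hvF k')
    have h' : ∃ k', w k' i = w k i := ⟨k, rfl⟩
    simp only [ht, dif_neg h, dif_pos h']
    rw [(hwinj _ _ _ _ (Classical.choose_spec h')).1]
  have ht3 : ∀ i x, (¬ ∃ k, v k = x) → (¬ ∃ k, w k i = x) → t i x = x := by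
    intro i x h h'
    simp only [ht, dif_neg h, dif_neg h']
  have hinv : ∀ i, Function.Involutive (t i) := by
    intro i x
    by_cases h : ∃ k, v k = x
    · obtain ⟨k, rfl⟩ := h
      rw [ht1, ht2]
    · by_cases h' : ∃ k, w k i = x
      · obtain ⟨k, rfl⟩ := h'
        rw [ht2, ht1]
      · rw [ht3 i x h h', ht3 i x h h']
  refine ⟨fun i => (hinv i).toPerm (t i), ?_, ?_⟩
  · intro i
    apply Set.Finite.subset ((Set.finite_range v).union (Set.finite_range (w · i)))
    intro x hx
    by_contra hmem
    simp only [Set.mem_union, Set.mem_range, not_or, not_exists] at hmem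
    exact hx (ht3 i x (fun ⟨k, hk⟩ => hmem.1 k hk) (fun ⟨k, hk⟩ => hmem.2 k hk))
  · intro i k hik
    have himg : ∀ i, ((hinv i).toPerm (t i)) '' (F : Set J) ⊆ Set.range (w · i) := by
      rintro i _ ⟨x, hx, rfl⟩
      obtain ⟨k', rfl⟩ := hvsurj x hx
      exact ⟨k', (ht1 i k').symm⟩
    refine Set.disjoint_of_subset (himg i) (himg k) ?_
    rw [Set.disjoint_left]
    rintro x ⟨k₁, rfl⟩ ⟨k₂, hk₂⟩
    exact hik ((hwinj _ _ _ _ hk₂).2.symm)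


section MapLemmas

variable {J : Type*} {A : Type*} [CStarAlgebra A] (a : J → A)

lemma carM_mono {F T : Set J} (h : F ⊆ T) : carM a F ≤ carM a T :=
  StarAlgebra.adjoin_le ((Set.image_mono (f := a) h).trans (StarAlgebra.subset_adjoin ℂ _))

/-- A star-alg equiv sending each generator `a j` (for `j ∈ F`) into `carM a T`
maps `carM a F` into `carM a T`. -/
lemma carM_map {F T : Set J} (ψ : A ≃⋆ₐ[ℂ] A) (hgen : ∀ j ∈ F, ψ (a j) ∈ carM a T)
    {b : A} (hb : b ∈ carM a F) : ψ b ∈ carM a T := by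
  induction hb using StarAlgebra.adjoin_induction with
  | mem x hx => obtain ⟨j, hj, rfl⟩ := hx; exact hgen j hj
  | algebraMap r => rw [AlgHomClass.commutes ψ r]; exact algebraMap_mem _ r
  | add x y hx hy ihx ihy => rw [map_add]; exact add_mem ihx ihy
  | mul x y hx hy ihx ihy => rw [map_mul]; exact mul_mem ihx ihy
  | star x hx ihx => rw [map_star]; exact star_mem ihx

/-- Two star-alg equivs agreeing on generators agree everywhere, given density. -/
lemma eq_on_all (htop : (StarAlgebra.adjoin ℂ (Set.range a)).topologicalClosure = ⊤)
    (ψ₁ ψ₂ : A ≃⋆ₐ[ℂ] A) (h : ∀ j, ψ₁ (a j) = ψ₂ (a j)) : ∀ x, ψ₁ x = ψ₂ x := by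
  have heq : Set.EqOn ψ₁ ψ₂ ((StarAlgebra.adjoin ℂ (Set.range a) : StarSubalgebra ℂ A) : Set A) := by
    intro x hx
    induction hx using StarAlgebra.adjoin_induction with
    | mem x hx => obtain ⟨j, rfl⟩ := hx; exact h j
    | algebraMap r => rw [AlgHomClass.commutes ψ₁ r, AlgHomClass.commutes ψ₂ r]
    | add x y hx hy ihx ihy => rw [map_add, map_add, ihx, ihy]
    | mul x y hx hy ihx ihy => rw [map_mul, map_mul, ihx, ihy]
    | star x hx ihx => rw [map_star, map_star, ihx]
  have hcl : Set.EqOn ψ₁ ψ₂ (closure ((StarAlgebra.adjoin ℂ (Set.range a) :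
      StarSubalgebra ℂ A) : Set A)) :=
    heq.closure (StarAlgEquiv.isometry ψ₁).continuous (StarAlgEquiv.isometry ψ₂).continuous
  intro x
  apply hcl
  rw [← StarSubalgebra.topologicalClosure_coe, htop]
  trivial

/-- Every element of the full generated star algebra lies in a finitely generated piece. -/
lemma exists_finset_mem {b : A} (hb : b ∈ StarAlgebra.adjoin ℂ (Set.range a)) :
    ∃ F : Finset J, b ∈ carM a (F : Set J) := by
  classical
  induction hb using StarAlgebra.adjoin_induction with
  | mem x hx =>
      obtain ⟨j, rfl⟩ := hx
      exact ⟨{j}, StarAlgebra.subset_adjoin ℂ _ ⟨j, by simp⟩⟩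
  | algebraMap r => exact ⟨∅, algebraMap_mem _ r⟩
  | add x y hx hy ihx ihy =>
      obtain ⟨F₁, h₁⟩ := ihx; obtain ⟨F₂, h₂⟩ := ihy
      refine ⟨F₁ ∪ F₂, add_mem ?_ ?_⟩
      · exact carM_mono a (Finset.coe_subset.mpr Finset.subset_union_left) h₁
      · exact carM_mono a (Finset.coe_subset.mpr Finset.subset_union_right) h₂
  | mul x y hx hy ihx ihy =>
      obtain ⟨F₁, h₁⟩ := ihx; obtain ⟨F₂, h₂⟩ := ihy
      refine ⟨F₁ ∪ F₂, mul_mem ?_ ?_⟩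
      · exact carM_mono a (Finset.coe_subset.mpr Finset.subset_union_left) h₁
      · exact carM_mono a (Finset.coe_subset.mpr Finset.subset_union_right) h₂
  | star x hx ihx =>
      obtain ⟨F, hF⟩ := ihx
      exact ⟨F, star_mem hF⟩

end MapLemmas

section Estimate

variable {J : Type*} {A : Type*} [CStarAlgebra A] [PartialOrder A] [StarOrderedRing A]

/-- A state is norm-bounded by 1. -/
lemma state_abs_le (φ : A →ₗ[ℂ] ℂ) (h1 : φ 1 = 1) (hpos : ∀ x : A, 0 ≤ φ (star x * x))
    (d : A) : ‖φ d‖ ≤ ‖d‖ := by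
  have hfirst := state_normSq_le φ h1 hpos d
  have hsa : IsSelfAdjoint (star d * d) := IsSelfAdjoint.star_mul_self d
  have hle : star d * d ≤ algebraMap ℝ A ‖star d * d‖ :=
    IsSelfAdjoint.le_algebraMap_norm_self hsa
  have hmon := state_mono φ hpos hle
  rw [state_apply_algebraMap φ h1] at hmon
  have hre : (φ (star d * d)).re ≤ ‖star d * d‖ := by
    rw [Complex.le_def] at hmon
    simpa using hmon.1
  have hnorm : ‖star d * d‖ = ‖d‖ * ‖d‖ := CStarRing.norm_star_mul_self
  have habs : (‖φ d‖) ^ 2 = Complex.normSq (φ d) := Complex.sq_norm _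
  nlinarith [norm_nonneg (φ d), norm_nonneg d, hfirst]

variable [Infinite J]

lemma odd_estimate (a : J → A)
    (h2 : ∀ j k : J, j ≠ k → star (a j) * a k + a k * star (a j) = 0)
    (h3 : ∀ j k : J, a j * a k + a k * a j = 0)
    (α : Equiv.Perm J → (A ≃⋆ₐ[ℂ] A))
    (hα : ∀ g : Equiv.Perm J, IsFinitePerm g → ∀ j : J, α g (a j) = a (g j))
    (Θ : A ≃⋆ₐ[ℂ] A) (hΘ : ∀ j : J, Θ (a j) = -(a j))
    (hcomm : ∀ g : Equiv.Perm J, IsFinitePerm g → ∀ x : A, Θ (α g x) = α g (Θ x))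
    (φ : A →ₗ[ℂ] ℂ) (h1 : φ 1 = 1) (hpos : ∀ x : A, 0 ≤ φ (star x * x))
    (hsym : ∀ g : Equiv.Perm J, IsFinitePerm g → ∀ x : A, φ (α g x) = φ x)
    (F : Finset J) {b : A} (hb : b ∈ carM a (F : Set J)) (hodd : Θ b = -b) (N : ℕ) :
    (N : ℝ) * Complex.normSq (φ b) ≤ ‖star b * b + b * star b‖ := by
  obtain ⟨g, hgfin, hgdisj⟩ := exists_perms F N
  set x : Fin N → A := fun i => α (g i) b with hx
  have hmem : ∀ i, x i ∈ carM a ((g i) '' (F : Set J)) := by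
    intro i
    refine carM_map a (α (g i)) (fun j hj => ?_) hb
    rw [hα (g i) (hgfin i) j]
    exact StarAlgebra.subset_adjoin ℂ _ ⟨g i j, Set.mem_image_of_mem _ hj, rfl⟩
  have hodd_i : ∀ i, Θ (x i) = -(x i) := by
    intro i
    rw [hx]
    simp only
    rw [hcomm (g i) (hgfin i) b, hodd, map_neg]
  have hstarodd_i : ∀ i, Θ (star (x i)) = -(star (x i)) := by
    intro i
    rw [map_star, hodd_i i, star_neg]
  have hcross : ∀ i k, i ≠ k → star (x i) * x k + x k * star (x i) = 0 := by
    intro i k hik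
    have hd := hgdisj i k hik
    have := supercomm a h2 h3 Θ hΘ hd (star_mem (hmem i)) (hmem k) (hodd_i k)
    rw [hstarodd_i i, mul_neg] at this
    rw [this]
    exact neg_add_cancel _
  set S := ∑ i, x i with hS
  have hstarS : star S = ∑ i, star (x i) := by rw [hS, star_sum]
  set z := star b * b + b * star b with hz
  have hdiag : ∀ i, star (x i) * x i + x i * star (x i) = α (g i) z := by
    intro i
    rw [hz, map_add, map_mul, map_mul, map_star]
  have key : star S * S + S * star S = ∑ i, α (g i) z := by
    rw [hS, hstarS, Finset.sum_mul_sum, Finset.sum_mul_sum]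
    rw [Finset.sum_comm (s := Finset.univ) (t := Finset.univ)
      (f := fun i k => x i * star (x k))]
    rw [← Finset.sum_add_distrib]
    refine Finset.sum_congr rfl fun i _ => ?_
    rw [← Finset.sum_add_distrib]
    rw [Finset.sum_eq_single i (fun k _ hki => hcross i k (Ne.symm hki)) (by simp)]
    exact hdiag i
  have hz_sa : IsSelfAdjoint z := by
    rw [hz]
    exact (IsSelfAdjoint.star_mul_self b).add (IsSelfAdjoint.mul_star_self b)
  have hz_le : z ≤ algebraMap ℝ A ‖z‖ := IsSelfAdjoint.le_algebraMap_norm_self hz_sa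
  have hterm_le : ∀ i : Fin N, α (g i) z ≤ algebraMap ℝ A ‖z‖ := by
    intro i
    have := starAlgEquiv_monotone (α (g i)) hz_le
    rwa [starAlgEquiv_apply_algebraMap] at this
  have hsum_le : ∑ i : Fin N, α (g i) z ≤ algebraMap ℝ A ((N : ℝ) * ‖z‖) := by
    calc ∑ i : Fin N, α (g i) z ≤ ∑ _i : Fin N, algebraMap ℝ A ‖z‖ :=
          Finset.sum_le_sum (fun i _ => hterm_le i)
      _ = N • algebraMap ℝ A ‖z‖ := by rw [Finset.sum_const, Finset.card_univ, Fintype.card_fin]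
      _ = algebraMap ℝ A ((N : ℝ) * ‖z‖) := by
          rw [← map_nsmul, nsmul_eq_mul]
  have hSSnonneg : (0 : A) ≤ S * star S := by
    have := star_mul_self_nonneg (star S)
    rwa [star_star] at this
  have hSS_le : star S * S ≤ algebraMap ℝ A ((N : ℝ) * ‖z‖) := by
    calc star S * S ≤ star S * S + S * star S := le_add_of_nonneg_right hSSnonneg
      _ = ∑ i, α (g i) z := key
      _ ≤ algebraMap ℝ A ((N : ℝ) * ‖z‖) := hsum_le
  have hφS : Complex.normSq (φ S) ≤ (N : ℝ) * ‖z‖ := by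
    have hclif := state_normSq_le φ h1 hpos S
    have hmon := state_mono φ hpos hSS_le
    rw [state_apply_algebraMap φ h1] at hmon
    rw [Complex.le_def] at hmon
    have := hmon.1
    simp only [Complex.ofReal_re] at this
    linarith
  have hφS_val : φ S = (N : ℂ) * φ b := by
    rw [hS, map_sum]
    have : ∀ i : Fin N, φ (x i) = φ b := fun i => hsym (g i) (hgfin i) b
    rw [Finset.sum_congr rfl (fun i _ => this i), Finset.sum_const, Finset.card_univ,
      Fintype.card_fin, nsmul_eq_mul]
  rw [hφS_val, Complex.normSq_mul] at hφS
  have hNsq : Complex.normSq ((N : ℕ) : ℂ) = (N : ℝ) * (N : ℝ) := by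
    simp [Complex.normSq_apply]
  rw [hNsq] at hφS
  rcases Nat.eq_zero_or_pos N with hN | hN
  · subst hN
    simpa using norm_nonneg z
  · have hNpos : (0 : ℝ) < N := by exact_mod_cast hN
    have := hφS
    rw [mul_assoc] at this
    calc (N : ℝ) * Complex.normSq (φ b) ≤ ‖z‖ := by
          exact le_of_mul_le_mul_left (by linarith) hNpos
      _ = ‖star b * b + b * star b‖ := by rw [hz]

end Estimate


/-- Every symmetric state on the CAR algebra over an infinite index set `J` is even:
if `(a_j)` is a CAR family over `J` in `A`, `(α_g)` is a family of *-automorphisms of `A`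
implementing the finite permutations of `J`, `Θ` is a parity automorphism, and `φ` is a
state invariant under all the `α_g`, then `φ ∘ Θ = φ`. -/
theorem symmetric_state_is_even {J : Type*} [Infinite J] {A : Type*}
    [NormedRing A] [StarRing A] [CStarRing A] [NormedAlgebra ℂ A] [StarModule ℂ A]
    [CompleteSpace A]
    (a : J → A) (ha : IsCARFamily a)
    (α : Equiv.Perm J → (A ≃⋆ₐ[ℂ] A))
    (hα : ∀ g : Equiv.Perm J, IsFinitePerm g → ∀ j : J, α g (a j) = a (g j))
    (Θ : A ≃⋆ₐ[ℂ] A) (hΘ : ∀ j : J, Θ (a j) = -(a j))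
    (φ : A →ₗ[ℂ] ℂ) (hφ : IsState φ)
    (hsym : ∀ g : Equiv.Perm J, IsFinitePerm g → ∀ x : A, φ (α g x) = φ x) :
    ∀ x : A, φ (Θ x) = φ x := by
  letI : CStarAlgebra A := {}
  letI : PartialOrder A := CStarAlgebra.spectralOrder A
  haveI : StarOrderedRing A := CStarAlgebra.spectralOrderedRing A
  obtain ⟨h1c, h2c, h3c, htop⟩ := ha
  obtain ⟨h1, hpos⟩ := hφ
  -- `Θ` is an involution
  have hΘΘ : ∀ y : A, Θ (Θ y) = y := by
    have := eq_on_all a htop (Θ.trans Θ) (StarAlgEquiv.refl ℂ A) (fun j => by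
      simp [StarAlgEquiv.trans_apply, hΘ j])
    intro y
    simpa [StarAlgEquiv.trans_apply] using this y
  -- `Θ` commutes with each `α g`
  have hcomm : ∀ g : Equiv.Perm J, IsFinitePerm g → ∀ y : A, Θ (α g y) = α g (Θ y) := by
    intro g hg
    have := eq_on_all a htop ((α g).trans Θ) (Θ.trans (α g)) (fun j => by
      simp [StarAlgEquiv.trans_apply, hα g hg j, hΘ j, hΘ (g j), map_neg])
    intro y
    simpa [StarAlgEquiv.trans_apply] using this y
  -- `Θ` preserves the generated star subalgebra
  have hΘmem : ∀ {y : A}, y ∈ StarAlgebra.adjoin ℂ (Set.range a) →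
      Θ y ∈ StarAlgebra.adjoin ℂ (Set.range a) := by
    intro y hy
    induction hy using StarAlgebra.adjoin_induction with
    | mem x hx =>
        obtain ⟨j, rfl⟩ := hx
        rw [hΘ j]
        exact neg_mem (StarAlgebra.subset_adjoin ℂ _ ⟨j, rfl⟩)
    | algebraMap r => rw [AlgHomClass.commutes Θ r]; exact algebraMap_mem _ r
    | add x y hx hy ihx ihy => rw [map_add]; exact add_mem ihx ihy
    | mul x y hx hy ihx ihy => rw [map_mul]; exact mul_mem ihx ihy
    | star x hx ihx => rw [map_star]; exact star_mem ihx
  -- states vanish on odd elements of the algebraic CAR algebra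
  have hvanish : ∀ {c : A}, c ∈ StarAlgebra.adjoin ℂ (Set.range a) → Θ c = -c → φ c = 0 := by
    intro c hc hcodd
    obtain ⟨F, hF⟩ := exists_finset_mem a hc
    have hest := fun N => odd_estimate a h2c h3c α hα Θ hΘ hcomm φ h1 hpos hsym F hF hcodd N
    by_contra hne
    have hnsq : 0 < Complex.normSq (φ c) := by
      rcases lt_or_eq_of_le (Complex.normSq_nonneg (φ c)) with h | h
      · exact h
      · exact absurd (Complex.normSq_eq_zero.mp h.symm) hne
    obtain ⟨N, hN⟩ := exists_nat_gt (‖star c * c + c * star c‖ / Complex.normSq (φ c))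
    have := hest N
    rw [div_lt_iff₀ hnsq] at hN
    linarith
  -- vanishing on all odd elements by density
  have hodd_vanish : ∀ {y : A}, Θ y = -y → φ y = 0 := by
    intro y hy
    have hbound : ∀ ε > (0 : ℝ), ‖φ y‖ ≤ ε := by
      intro ε hε
      have hyc : y ∈ closure ((StarAlgebra.adjoin ℂ (Set.range a) :
          StarSubalgebra ℂ A) : Set A) := by
        rw [← StarSubalgebra.topologicalClosure_coe, htop]; trivial
      rw [Metric.mem_closure_iff] at hyc
      obtain ⟨b, hbmem, hbd⟩ := hyc ε hε
      rw [dist_eq_norm] at hbd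
      set bm : A := (2⁻¹ : ℂ) • (b - Θ b) with hbm
      have hbm_mem : bm ∈ StarAlgebra.adjoin ℂ (Set.range a) :=
        SMulMemClass.smul_mem _ (sub_mem hbmem (hΘmem hbmem))
      have hbm_odd : Θ bm = -bm := by
        rw [hbm, map_smul, map_sub, hΘΘ b, smul_sub, smul_sub, neg_sub]
      have hφbm : φ bm = 0 := hvanish hbm_mem hbm_odd
      have hclose : ‖y - bm‖ ≤ ‖y - b‖ := by
        have hrepr : y - bm = (2⁻¹ : ℂ) • ((y - b) - Θ (y - b)) := by
          rw [map_sub, hbm, smul_sub, smul_sub]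
          rw [hy]
          module
        rw [hrepr]
        have : ‖(2⁻¹ : ℂ) • ((y - b) - Θ (y - b))‖
            = 2⁻¹ * ‖(y - b) - Θ (y - b)‖ := by
          rw [norm_smul]
          norm_num
        rw [this]
        have h2 : ‖(y - b) - Θ (y - b)‖ ≤ ‖y - b‖ + ‖Θ (y - b)‖ := norm_sub_le _ _
        have h3 : ‖Θ (y - b)‖ = ‖y - b‖ := StarAlgEquiv.norm_map Θ (y - b)
        linarith
      have : ‖φ y‖ = ‖φ (y - bm)‖ := by
        rw [map_sub, hφbm, sub_zero]
      rw [this]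
      calc ‖φ (y - bm)‖ ≤ ‖y - bm‖ := state_abs_le φ h1 hpos _
        _ ≤ ‖y - b‖ := hclose
        _ ≤ ε := le_of_lt hbd
    have : ‖φ y‖ = 0 := by
      by_contra hne
      have hpos' : 0 < ‖φ y‖ :=
        lt_of_le_of_ne (norm_nonneg _) (Ne.symm hne)
      have := hbound (‖φ y‖ / 2) (by linarith)
      linarith
    exact norm_eq_zero.mp this
  intro x
  have hxodd : Θ ((2⁻¹ : ℂ) • (x - Θ x)) = -((2⁻¹ : ℂ) • (x - Θ x)) := by
    rw [map_smul, map_sub, hΘΘ x, smul_sub, smul_sub, neg_sub]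
  have h0 := hodd_vanish hxodd
  rw [map_smul, map_sub, smul_eq_mul] at h0
  have h2 : φ x - φ (Θ x) = 0 := by
    rcases mul_eq_zero.mp h0 with h | h
    · norm_num at h
    · exact h
  exact (sub_eq_zero.mp h2).symm
end

section
/- Let A be a unital C*-algebra and (a_j)_{j≥1} a CAR family over the positive integers in A. Set U_j = a_j·a_j* − a_j*·a_j, V_0 = 1, V_j = U_1·U_2·⋯·U_j, and for each j ≥ 1 define e₁₁(j) = a_j·a_j*, e₁₂(j) = V_{j−1}·a_j, e₂₁(j) = V_{j−1}·a_j*, e₂₂(j) = a_j*·a_j. Then the family {e_{kl}(j) : k,l ∈ {1,2}, j ≥ 1} is a system of commuting 2×2 matrix units: for each j, e_{kl}(j)* = e_{lk}(j), e_{kl}(j)·e_{pq}(j) = δ_{lp}·e_{kq}(j) for all k,l,p,q ∈ {1,2}, and e₁₁(j) + e₂₂(j) = 1; moreover for i ≠ j, e_{kl}(i)·e_{pq}(j) = e_{pq}(j)·e_{kl}(i) for all k,l,p,q ∈ {1,2}. -/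
set_option linter.unusedSectionVars false
set_option maxHeartbeats 1000000


open scoped ComplexOrder

/-- Jordan–Klein–Wigner prefactors: `carV a i = U_0 · U_1 ⋯ U_{i-1}` where
`U_j = a_j·a_j* − a_j*·a_j` (sites are labelled by `ℕ`, `carV a 0 = 1`). -/
def carV {A : Type*} [Ring A] [StarRing A] (a : ℕ → A) : ℕ → A
  | 0 => 1
  | i + 1 => carV a i * (a i * star (a i) - star (a i) * a i)

/-- Jordan–Klein–Wigner matrix units at site `i`:
`e₁₁(i) = a_i·a_i*`, `e₁₂(i) = V_i·a_i`, `e₂₁(i) = V_i·a_i*`, `e₂₂(i) = a_i*·a_i`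
(rows and columns indexed by `Fin 2`). -/
def carE {A : Type*} [Ring A] [StarRing A] (a : ℕ → A) (i : ℕ) (k l : Fin 2) : A :=
  if k = 0 then (if l = 0 then a i * star (a i) else carV a i * a i)
  else (if l = 0 then carV a i * star (a i) else star (a i) * a i)

namespace CARAux

variable {A : Type*} [Ring A] [StarRing A] [Algebra ℂ A] {a : ℕ → A}

def carU (a : ℕ → A) (i : ℕ) : A := a i * star (a i) - star (a i) * a i

lemma carV_succ (i : ℕ) : carV a (i + 1) = carV a i * carU a i := rfl

lemma carE_00 (i : ℕ) : carE a i 0 0 = a i * star (a i) := rfl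
lemma carE_01 (i : ℕ) : carE a i 0 1 = carV a i * a i := rfl
lemma carE_10 (i : ℕ) : carE a i 1 0 = carV a i * star (a i) := rfl
lemma carE_11 (i : ℕ) : carE a i 1 1 = star (a i) * a i := rfl

section
variable (h1 : ∀ j, star (a j) * a j + a j * star (a j) = 1)
variable (h2 : ∀ j k, j ≠ k → star (a j) * a k + a k * star (a j) = 0)
variable (h3 : ∀ j k, a j * a k + a k * a j = 0)
include h1 h2 h3

lemma half {x : A} (h : x + x = 0) : x = 0 := by
  have h2 : (2 : ℂ) • x = 0 := by rw [two_smul]; exact h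
  simpa using h2

lemma aa (i j : ℕ) : a i * a j = -(a j * a i) :=
  eq_neg_of_add_eq_zero_left (h3 i j)

lemma ss (i j : ℕ) : star (a i) * star (a j) = -(star (a j) * star (a i)) := by
  simpa [star_mul] using congrArg star (aa h1 h2 h3 j i)

lemma sa {i j : ℕ} (h : i ≠ j) : star (a i) * a j = -(a j * star (a i)) :=
  eq_neg_of_add_eq_zero_left (h2 i j h)

lemma as {i j : ℕ} (h : i ≠ j) : a i * star (a j) = -(star (a j) * a i) := by
  exact eq_neg_of_add_eq_zero_right (h2 j i h.symm)

-- single-site rewrite rules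
lemma asq (i : ℕ) : a i * a i = 0 := half h1 h2 h3 (h3 i i)

lemma ssq (i : ℕ) : star (a i) * star (a i) = 0 := by
  simpa using congrArg star (asq h1 h2 h3 i)

lemma asqx (i : ℕ) (x : A) : a i * (a i * x) = 0 := by
  rw [← mul_assoc, asq h1 h2 h3, zero_mul]

lemma ssqx (i : ℕ) (x : A) : star (a i) * (star (a i) * x) = 0 := by
  rw [← mul_assoc, ssq h1 h2 h3, zero_mul]

lemma asa (i : ℕ) : a i * (star (a i) * a i) = a i := by
  have h' : a i * (star (a i) * a i + a i * star (a i)) = a i * 1 := by rw [h1 i]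
  rw [mul_add, mul_one, ← mul_assoc, ← mul_assoc, asq h1 h2 h3, zero_mul, add_zero,
    mul_assoc] at h'
  exact h'

lemma sas (i : ℕ) : star (a i) * (a i * star (a i)) = star (a i) := by
  simpa [star_mul, mul_assoc] using congrArg star (asa h1 h2 h3 i)

lemma asax (i : ℕ) (x : A) : a i * (star (a i) * (a i * x)) = a i * x := by
  rw [← mul_assoc, ← mul_assoc, mul_assoc (a i), asa h1 h2 h3]

lemma sasx (i : ℕ) (x : A) : star (a i) * (a i * (star (a i) * x)) = star (a i) * x := by
  rw [← mul_assoc, ← mul_assoc, mul_assoc (star (a i)), sas h1 h2 h3]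

-- carU basic facts
lemma aU (i : ℕ) : a i * carU a i = -(a i) := by
  simp only [carU, mul_sub]
  rw [← mul_assoc, asq h1 h2 h3, zero_mul, asa h1 h2 h3, zero_sub]

lemma Ua (i : ℕ) : carU a i * a i = a i := by
  simp only [carU, sub_mul]
  rw [mul_assoc, asa h1 h2 h3, mul_assoc, asq h1 h2 h3, mul_zero, sub_zero]

lemma Us (i : ℕ) : carU a i * star (a i) = -(star (a i)) := by
  simp only [carU, sub_mul]
  rw [mul_assoc, ssq h1 h2 h3, mul_zero, mul_assoc, sas h1 h2 h3, zero_sub]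

lemma sU (i : ℕ) : star (a i) * carU a i = star (a i) := by
  simp only [carU, mul_sub]
  rw [sas h1 h2 h3, ← mul_assoc, ssq h1 h2 h3, zero_mul, sub_zero]

lemma starU (i : ℕ) : star (carU a i) = carU a i := by
  simp [carU, star_sub, star_mul]

-- cross-site commutation
lemma cma {i j : ℕ} (h : i ≠ j) : Commute (a i * star (a i)) (a j) := by
  have : a i * star (a i) * a j = a j * (a i * star (a i)) := by
    rw [mul_assoc, sa h1 h2 h3 h, mul_neg, ← mul_assoc, aa h1 h2 h3 i j, neg_mul,
      neg_neg, mul_assoc]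
  exact this

lemma cna {i j : ℕ} (h : i ≠ j) : Commute (star (a i) * a i) (a j) := by
  have : star (a i) * a i * a j = a j * (star (a i) * a i) := by
    rw [mul_assoc, aa h1 h2 h3 i j, mul_neg, ← mul_assoc, sa h1 h2 h3 h, neg_mul,
      neg_neg, mul_assoc]
  exact this

lemma cms {i j : ℕ} (h : i ≠ j) : Commute (a i * star (a i)) (star (a j)) := by
  have h' := (cma h1 h2 h3 h).star_star
  simpa [star_mul] using h'

lemma cns {i j : ℕ} (h : i ≠ j) : Commute (star (a i) * a i) (star (a j)) := by
  have h' := (cna h1 h2 h3 h).star_star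
  simpa [star_mul] using h'

lemma cUa {i j : ℕ} (h : i ≠ j) : Commute (carU a i) (a j) :=
  (cma h1 h2 h3 h).sub_left (cna h1 h2 h3 h)

lemma cUs {i j : ℕ} (h : i ≠ j) : Commute (carU a i) (star (a j)) :=
  (cms h1 h2 h3 h).sub_left (cns h1 h2 h3 h)

lemma cUm (k i : ℕ) : Commute (carU a k) (a i * star (a i)) := by
  rcases eq_or_ne k i with rfl | h
  · show carU a k * (a k * star (a k)) = (a k * star (a k)) * carU a k
    rw [← mul_assoc, Ua h1 h2 h3, mul_assoc, sU h1 h2 h3]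
  · exact (cUa h1 h2 h3 h).mul_right (cUs h1 h2 h3 h)

lemma cUn (k i : ℕ) : Commute (carU a k) (star (a i) * a i) := by
  rcases eq_or_ne k i with rfl | h
  · show carU a k * (star (a k) * a k) = (star (a k) * a k) * carU a k
    rw [← mul_assoc, Us h1 h2 h3, mul_assoc, aU h1 h2 h3, neg_mul, mul_neg]
  · exact (cUs h1 h2 h3 h).mul_right (cUa h1 h2 h3 h)

lemma cUU (k l : ℕ) : Commute (carU a k) (carU a l) :=
  (cUm h1 h2 h3 k l).sub_right (cUn h1 h2 h3 k l)

lemma cVU (i k : ℕ) : Commute (carV a i) (carU a k) := by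
  induction i with
  | zero => exact Commute.one_left _
  | succ n ih => rw [carV_succ]; exact ih.mul_left (cUU h1 h2 h3 n k)

lemma cVa {i j : ℕ} (h : i ≤ j) : Commute (carV a i) (a j) := by
  induction i with
  | zero => exact Commute.one_left _
  | succ n ih =>
    rw [carV_succ]
    exact (ih (by omega)).mul_left (cUa h1 h2 h3 (by omega))

lemma cVs {i j : ℕ} (h : i ≤ j) : Commute (carV a i) (star (a j)) := by
  induction i with
  | zero => exact Commute.one_left _
  | succ n ih =>
    rw [carV_succ]
    exact (ih (by omega)).mul_left (cUs h1 h2 h3 (by omega))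

lemma cVm (i k : ℕ) : Commute (carV a i) (a k * star (a k)) := by
  induction i with
  | zero => exact Commute.one_left _
  | succ n ih => rw [carV_succ]; exact ih.mul_left (cUm h1 h2 h3 n k)

lemma cVn (i k : ℕ) : Commute (carV a i) (star (a k) * a k) := by
  induction i with
  | zero => exact Commute.one_left _
  | succ n ih => rw [carV_succ]; exact ih.mul_left (cUn h1 h2 h3 n k)

lemma cVV (i j : ℕ) : Commute (carV a i) (carV a j) := by
  induction j with
  | zero => exact Commute.one_right _
  | succ n ih => rw [carV_succ]; exact ih.mul_right (cVU h1 h2 h3 i n)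

lemma starV (i : ℕ) : star (carV a i) = carV a i := by
  induction i with
  | zero => show star (1 : A) = 1; exact star_one A
  | succ n ih =>
    rw [carV_succ, star_mul, starU h1 h2 h3 n, ih]
    exact ((cVU h1 h2 h3 n n).eq).symm

lemma Usq (i : ℕ) : carU a i * carU a i = 1 := by
  have e : carU a i * carU a i
      = carU a i * (a i * star (a i)) - carU a i * (star (a i) * a i) := by
    have : carU a i * carU a i
        = carU a i * (a i * star (a i) - star (a i) * a i) := rfl
    rw [this, mul_sub]
  rw [e, ← mul_assoc, Ua h1 h2 h3, ← mul_assoc, Us h1 h2 h3, neg_mul, sub_neg_eq_add]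
  exact (add_comm _ _).trans (h1 i)

lemma Vsq (i : ℕ) : carV a i * carV a i = 1 := by
  induction i with
  | zero => show (1 : A) * 1 = 1; rw [one_mul]
  | succ n ih =>
    rw [carV_succ, (cVU h1 h2 h3 n n).symm.mul_mul_mul_comm, ih, one_mul,
      Usq h1 h2 h3]

lemma aV {i j : ℕ} (h : i < j) : a i * carV a j = -(carV a j * a i) := by
  induction j with
  | zero => omega
  | succ n ih =>
    rw [carV_succ, ← mul_assoc]
    rcases eq_or_ne i n with rfl | hne
    · rw [← (cVa h1 h2 h3 le_rfl).eq, mul_assoc, aU h1 h2 h3, mul_neg, mul_assoc,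
        Ua h1 h2 h3]
    · rw [ih (by omega), neg_mul, mul_assoc, mul_assoc, (cUa h1 h2 h3 hne.symm).eq]

lemma sV {i j : ℕ} (h : i < j) : star (a i) * carV a j = -(carV a j * star (a i)) := by
  induction j with
  | zero => omega
  | succ n ih =>
    rw [carV_succ, ← mul_assoc]
    rcases eq_or_ne i n with rfl | hne
    · rw [← (cVs h1 h2 h3 le_rfl).eq, mul_assoc, sU h1 h2 h3, mul_assoc, Us h1 h2 h3,
        mul_neg, neg_neg]
    · rw [ih (by omega), neg_mul, mul_assoc, mul_assoc, (cUs h1 h2 h3 hne.symm).eq]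

-- simp rules for the one-site algebra involving V
lemma aVc (i : ℕ) : a i * carV a i = carV a i * a i := ((cVa h1 h2 h3 le_rfl).eq).symm

lemma sVc (i : ℕ) : star (a i) * carV a i = carV a i * star (a i) :=
  ((cVs h1 h2 h3 le_rfl).eq).symm

lemma aVcx (i : ℕ) (x : A) : a i * (carV a i * x) = carV a i * (a i * x) := by
  rw [← mul_assoc, aVc h1 h2 h3, mul_assoc]

lemma sVcx (i : ℕ) (x : A) : star (a i) * (carV a i * x) = carV a i * (star (a i) * x) := by
  rw [← mul_assoc, sVc h1 h2 h3, mul_assoc]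

lemma VVx (i : ℕ) (x : A) : carV a i * (carV a i * x) = x := by
  rw [← mul_assoc, Vsq h1 h2 h3, one_mul]

lemma starE12 (i : ℕ) : star (carV a i * a i) = carV a i * star (a i) := by
  rw [star_mul, starV h1 h2 h3, ← (cVs h1 h2 h3 le_rfl).eq]

lemma starE21 (i : ℕ) : star (carV a i * star (a i)) = carV a i * a i := by
  rw [star_mul, star_star, starV h1 h2 h3, ← (cVa h1 h2 h3 le_rfl).eq]

lemma ferm {i j : ℕ} {x y : A}
    (hxV : x * carV a j = -(carV a j * x))
    (hyV : carV a i * y = y * carV a i)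
    (hxy : x * y = -(y * x)) :
    (carV a i * x) * (carV a j * y) = (carV a j * y) * (carV a i * x) := by
  have hVV := (cVV h1 h2 h3 i j).eq
  calc carV a i * x * (carV a j * y)
      = carV a i * (x * carV a j) * y := by noncomm_ring
    _ = carV a i * (-(carV a j * x)) * y := by rw [hxV]
    _ = -(carV a i * carV a j * (x * y)) := by noncomm_ring
    _ = -(carV a i * carV a j * (-(y * x))) := by rw [hxy]
    _ = carV a j * (carV a i * y) * x := by rw [hVV]; noncomm_ring
    _ = carV a j * (y * carV a i) * x := by rw [hyV]
    _ = carV a j * y * (carV a i * x) := by noncomm_ring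

lemma commE_of (x : A) (j : ℕ) (ca : Commute x (a j)) (cs : Commute x (star (a j)))
    (cV : Commute x (carV a j)) (p q : Fin 2) : Commute x (carE a j p q) := by
  rcases (by omega : p = 0 ∨ p = 1) with rfl | rfl <;>
    rcases (by omega : q = 0 ∨ q = 1) with rfl | rfl
  · exact ca.mul_right cs
  · exact cV.mul_right ca
  · exact cV.mul_right cs
  · exact cs.mul_right ca


lemma comm_lt {i j : ℕ} (h : i < j) (k l p q : Fin 2) :
    carE a i k l * carE a j p q = carE a j p q * carE a i k l := by
  have hne : i ≠ j := h.ne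
  rcases (by omega : k = 0 ∨ k = 1) with rfl | rfl <;>
    rcases (by omega : l = 0 ∨ l = 1) with rfl | rfl
  · exact (commE_of h1 h2 h3 _ j (cma h1 h2 h3 hne) (cms h1 h2 h3 hne)
      ((cVm h1 h2 h3 j i).symm) p q).eq
  · rcases (by omega : p = 0 ∨ p = 1) with rfl | rfl <;>
      rcases (by omega : q = 0 ∨ q = 1) with rfl | rfl
    · exact ((cVm h1 h2 h3 i j).mul_left ((cma h1 h2 h3 hne.symm).symm)).eq
    · exact ferm h1 h2 h3 (aV h1 h2 h3 h) ((cVa h1 h2 h3 h.le).eq) (aa h1 h2 h3 i j)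
    · exact ferm h1 h2 h3 (aV h1 h2 h3 h) ((cVs h1 h2 h3 h.le).eq) (as h1 h2 h3 hne)
    · exact ((cVn h1 h2 h3 i j).mul_left ((cna h1 h2 h3 hne.symm).symm)).eq
  · rcases (by omega : p = 0 ∨ p = 1) with rfl | rfl <;>
      rcases (by omega : q = 0 ∨ q = 1) with rfl | rfl
    · exact ((cVm h1 h2 h3 i j).mul_left ((cms h1 h2 h3 hne.symm).symm)).eq
    · exact ferm h1 h2 h3 (sV h1 h2 h3 h) ((cVa h1 h2 h3 h.le).eq) (sa h1 h2 h3 hne)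
    · exact ferm h1 h2 h3 (sV h1 h2 h3 h) ((cVs h1 h2 h3 h.le).eq) (ss h1 h2 h3 i j)
    · exact ((cVn h1 h2 h3 i j).mul_left ((cns h1 h2 h3 hne.symm).symm)).eq
  · exact (commE_of h1 h2 h3 _ j (cna h1 h2 h3 hne) (cns h1 h2 h3 hne)
      ((cVn h1 h2 h3 j i).symm) p q).eq

end

end CARAux

/-- **Jordan–Klein–Wigner construction.** For a CAR family `(a_j)` over the positive
integers, the elements `carE a i k l` form a system of commuting 2×2 matrix units:
`e_{kl}(i)* = e_{lk}(i)`, `e_{kl}(i)·e_{pq}(i) = δ_{lp}·e_{kq}(i)`,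
`e₁₁(i) + e₂₂(i) = 1`, and matrix units at distinct sites commute. -/
theorem carE_matrix_units {A : Type*}
    [NormedRing A] [StarRing A] [CStarRing A] [NormedAlgebra ℂ A] [StarModule ℂ A]
    [CompleteSpace A]
    (a : ℕ → A) (ha : IsCARFamily a) :
    (∀ (i : ℕ) (k l : Fin 2), star (carE a i k l) = carE a i l k) ∧
    (∀ (i : ℕ) (k l p q : Fin 2),
      carE a i k l * carE a i p q = if l = p then carE a i k q else 0) ∧
    (∀ i : ℕ, carE a i 0 0 + carE a i 1 1 = 1) ∧
    (∀ i j : ℕ, i ≠ j → ∀ k l p q : Fin 2,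
      carE a i k l * carE a j p q = carE a j p q * carE a i k l) := by
  obtain ⟨h1, h2, h3, -⟩ := ha
  refine ⟨?_, ?_, ?_, ?_⟩
  · intro i k l
    rcases (by omega : k = 0 ∨ k = 1) with rfl | rfl <;>
      rcases (by omega : l = 0 ∨ l = 1) with rfl | rfl
    · simp only [CARAux.carE_00]; simp [star_mul]
    · simp only [CARAux.carE_01, CARAux.carE_10]; exact CARAux.starE12 h1 h2 h3 i
    · simp only [CARAux.carE_10, CARAux.carE_01]; exact CARAux.starE21 h1 h2 h3 i
    · simp only [CARAux.carE_11]; simp [star_mul]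
  · intro i k l p q
    rcases (by omega : k = 0 ∨ k = 1) with rfl | rfl <;>
      rcases (by omega : l = 0 ∨ l = 1) with rfl | rfl <;>
      rcases (by omega : p = 0 ∨ p = 1) with rfl | rfl <;>
      rcases (by omega : q = 0 ∨ q = 1) with rfl | rfl
    all_goals first | rw [if_pos rfl] | rw [if_neg (by decide)]
    all_goals simp only [CARAux.carE_00, CARAux.carE_01, CARAux.carE_10, CARAux.carE_11]
    all_goals simp only [mul_assoc, CARAux.asq h1 h2 h3, CARAux.ssq h1 h2 h3,
      CARAux.asqx h1 h2 h3, CARAux.ssqx h1 h2 h3, CARAux.asa h1 h2 h3,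
      CARAux.sas h1 h2 h3, CARAux.asax h1 h2 h3, CARAux.sasx h1 h2 h3,
      CARAux.aVc h1 h2 h3, CARAux.sVc h1 h2 h3, CARAux.aVcx h1 h2 h3,
      CARAux.sVcx h1 h2 h3, CARAux.Vsq h1 h2 h3, CARAux.VVx h1 h2 h3,
      mul_zero, zero_mul, mul_one, one_mul]
  · intro i
    simp only [CARAux.carE_00, CARAux.carE_11]
    exact (add_comm _ _).trans (h1 i)
  · intro i j hne k l p q
    rcases hne.lt_or_gt with h | h
    · exact CARAux.comm_lt h1 h2 h3 h k l p q
    · exact (CARAux.comm_lt h1 h2 h3 h p q k l).symm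
end

section
/- Let A be a unital C*-algebra, (a_j)_{j≥1} a CAR family over the positive integers in A, and Θ a parity automorphism of A. Define the Jordan–Klein–Wigner matrix units: U_j = a_j·a_j* − a_j*·a_j, V_0 = 1, V_j = U_1·⋯·U_j, e₁₁(j) = a_j·a_j*, e₁₂(j) = V_{j−1}·a_j, e₂₁(j) = V_{j−1}·a_j*, e₂₂(j) = a_j*·a_j. Let μ ∈ [0,1] and let φ be a state on A which is even, is a product state, and satisfies φ(a_j·a_j*) = μ for all j ≥ 1. Then for every l ≥ 1 and all indices i_k, j_k ∈ {1,2} (k = 1,…,l): φ(e_{i₁j₁}(1)·e_{i₂j₂}(2)·⋯·e_{i_l j_l}(l)) = (∏_{k=1}^l δ_{i_k j_k}) · μ^{|{k : i_k = 1}|} · (1−μ)^{|{k : i_k = 2}|}. -/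
set_option linter.unusedSectionVars false

open scoped ComplexOrder

/-- A product state: `φ(A₁⋯Aₘ) = φ(A₁)⋯φ(Aₘ)` whenever the `Aₖ` lie in the
C*-subalgebras generated by `a_{jₖ}` for pairwise distinct sites `jₖ`. -/
def IsProductState {J : Type*} {A : Type*} [NormedRing A] [StarRing A] [CStarRing A]
    [NormedAlgebra ℂ A] [StarModule ℂ A] [CompleteSpace A]
    (a : J → A) (φ : A →ₗ[ℂ] ℂ) : Prop :=
  ∀ (m : ℕ) (j : Fin m → J), Function.Injective j →
    ∀ x : Fin m → A,
      (∀ k : Fin m, x k ∈ (StarAlgebra.adjoin ℂ ({a (j k)} : Set A)).topologicalClosure) →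
      φ (List.ofFn x).prod = ∏ k : Fin m, φ (x k)

section CARAux

variable {A : Type*} [Ring A] [StarRing A] [Algebra ℂ A]

/-- `U_s = a_s a_s* - a_s* a_s`. -/
def carU (a : ℕ → A) (s : ℕ) : A := a s * star (a s) - star (a s) * a s

/-- The core factor at one site of a Jordan–Klein–Wigner matrix unit. -/
def carX (a : ℕ → A) (s : ℕ) (k l : Fin 2) : A :=
  if k = 0 then (if l = 0 then a s * star (a s) else a s)
  else (if l = 0 then star (a s) else star (a s) * a s)

/-- The number of off-diagonal matrix units strictly between sites `s` and `l`. -/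
def carN (i j : ℕ → Fin 2) (s l : ℕ) : ℕ :=
  ((Finset.Ioo s l).filter fun k => i k ≠ j k).card

variable (a : ℕ → A)

lemma carV_eq_prod (l : ℕ) :
    carV a l = (List.ofFn fun s : Fin l => carU a s).prod := by
  induction l with
  | zero => simp [carV]
  | succ n ih =>
    rw [List.ofFn_succ', List.prod_concat]
    simp only [Fin.coe_castSucc, Fin.val_last, ← ih]
    rfl

lemma carE_eq (s : ℕ) (k l : Fin 2) :
    carE a s k l = (if k = l then 1 else carV a s) * carX a s k l := by
  fin_cases k <;> fin_cases l <;> simp [carE, carX]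

lemma car_sq_zero (hanti : ∀ j k, a j * a k + a k * a j = 0) (s : ℕ) :
    a s * a s = 0 := by
  have h : a s * a s + a s * a s = 0 := hanti s s
  have h2 : (2 : ℂ) • (a s * a s) = 0 := by rw [two_smul]; exact h
  have := congrArg (fun x => ((2 : ℂ)⁻¹) • x) h2
  simpa [smul_smul] using this

lemma car_star_sq_zero (hanti : ∀ j k, a j * a k + a k * a j = 0) (s : ℕ) :
    star (a s) * star (a s) = 0 := by
  have := congrArg star (car_sq_zero a hanti s)
  simpa using this

lemma commute_U_a (hmix : ∀ j k, j ≠ k → star (a j) * a k + a k * star (a j) = 0)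
    (hanti : ∀ j k, a j * a k + a k * a j = 0)
    {s t : ℕ} (h : s ≠ t) : Commute (carU a s) (a t) := by
  have h1 : ∀ z, a s * (a t * z) = -(a t * (a s * z)) := by
    intro z
    have := eq_neg_of_add_eq_zero_left (hanti s t)
    rw [← mul_assoc, this, neg_mul, mul_assoc]
  have h2 : ∀ z, star (a s) * (a t * z) = -(a t * (star (a s) * z)) := by
    intro z
    have := eq_neg_of_add_eq_zero_left (hmix s t h)
    rw [← mul_assoc, this, neg_mul, mul_assoc]
  have h1' : a s * a t = -(a t * a s) := eq_neg_of_add_eq_zero_left (hanti s t)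
  have h2' : star (a s) * a t = -(a t * star (a s)) := eq_neg_of_add_eq_zero_left (hmix s t h)
  have : carU a s * a t = a t * carU a s := by
    simp only [carU, sub_mul, mul_sub, mul_assoc, h2', mul_neg, h1, neg_neg, h1', h2, neg_sub,
      neg_mul]
  exact this

lemma commute_U_star_a (hmix : ∀ j k, j ≠ k → star (a j) * a k + a k * star (a j) = 0)
    (hanti : ∀ j k, a j * a k + a k * a j = 0)
    {s t : ℕ} (h : s ≠ t) : Commute (carU a s) (star (a t)) := by
  have h0 : star (a s) * star (a t) + star (a t) * star (a s) = 0 := by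
    have := congrArg star (hanti t s)
    simpa [star_add, star_mul] using this
  have h1 : ∀ z, a s * (star (a t) * z) = -(star (a t) * (a s * z)) := by
    intro z
    have h' : a s * star (a t) = -(star (a t) * a s) :=
      eq_neg_of_add_eq_zero_right (hmix t s (Ne.symm h))
    rw [← mul_assoc, h', neg_mul, mul_assoc]
  have h2 : ∀ z, star (a s) * (star (a t) * z) = -(star (a t) * (star (a s) * z)) := by
    intro z
    have h' : star (a s) * star (a t) = -(star (a t) * star (a s)) :=
      eq_neg_of_add_eq_zero_left h0
    rw [← mul_assoc, h', neg_mul, mul_assoc]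
  have h1' : a s * star (a t) = -(star (a t) * a s) :=
    eq_neg_of_add_eq_zero_right (hmix t s (Ne.symm h))
  have h2' : star (a s) * star (a t) = -(star (a t) * star (a s)) :=
    eq_neg_of_add_eq_zero_left h0
  have : carU a s * star (a t) = star (a t) * carU a s := by
    simp only [carU, sub_mul, mul_sub, mul_assoc, h2', mul_neg, h1, neg_neg, h1', h2, neg_sub,
      neg_mul]
  exact this

lemma commute_U_X (hmix : ∀ j k, j ≠ k → star (a j) * a k + a k * star (a j) = 0)
    (hanti : ∀ j k, a j * a k + a k * a j = 0)
    {s t : ℕ} (h : s ≠ t) (k l : Fin 2) :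
    Commute (carU a s) (carX a t k l) := by
  have h1 := commute_U_a a hmix hanti (s := s) (t := t) h
  have h2 := commute_U_star_a a hmix hanti (s := s) (t := t) h
  fin_cases k <;> fin_cases l <;> simp only [carX] <;> simp <;>
    first
      | exact h1.mul_right h2
      | exact h1
      | exact h2
      | exact h2.mul_right h1

lemma commute_U_U (hmix : ∀ j k, j ≠ k → star (a j) * a k + a k * star (a j) = 0)
    (hanti : ∀ j k, a j * a k + a k * a j = 0)
    {s t : ℕ} (h : s ≠ t) : Commute (carU a s) (carU a t) := by
  have h1 := commute_U_a a hmix hanti (s := s) (t := t) h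
  have h2 := commute_U_star_a a hmix hanti (s := s) (t := t) h
  exact (h1.mul_right h2).sub_right (h2.mul_right h1)

lemma commute_U_Z (hmix : ∀ j k, j ≠ k → star (a j) * a k + a k * star (a j) = 0)
    (hanti : ∀ j k, a j * a k + a k * a j = 0)
    {s t : ℕ} (h : s ≠ t) (k l : Fin 2) (n : ℕ) :
    Commute (carU a s) (carX a t k l * carU a t ^ n) :=
  (commute_U_X a hmix hanti h k l).mul_right ((commute_U_U a hmix hanti h).pow_right n)

lemma aa_mul_U (hone : ∀ j, star (a j) * a j + a j * star (a j) = 1)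
    (hanti : ∀ j k, a j * a k + a k * a j = 0) (s : ℕ) :
    (a s * star (a s)) * carU a s = a s * star (a s) := by
  have hR : star (a s) * a s = 1 - a s * star (a s) := eq_sub_of_add_eq (hone s)
  have hA : ∀ z, a s * (a s * z) = 0 := fun z => by
    rw [← mul_assoc, car_sq_zero a hanti s, zero_mul]
  have hS : ∀ z, star (a s) * (star (a s) * z) = 0 := fun z => by
    rw [← mul_assoc, car_star_sq_zero a hanti s, zero_mul]
  have hR' : ∀ z, star (a s) * (a s * z) = z - a s * (star (a s) * z) := fun z => by
    rw [← mul_assoc, hR, sub_mul, one_mul, mul_assoc]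
  simp [carU, mul_sub, sub_mul, mul_assoc, hA, hS, hR, hR']

lemma a_mul_U (hone : ∀ j, star (a j) * a j + a j * star (a j) = 1)
    (hanti : ∀ j k, a j * a k + a k * a j = 0) (s : ℕ) :
    a s * carU a s = -(a s) := by
  have hR : star (a s) * a s = 1 - a s * star (a s) := eq_sub_of_add_eq (hone s)
  have hA : ∀ z, a s * (a s * z) = 0 := fun z => by
    rw [← mul_assoc, car_sq_zero a hanti s, zero_mul]
  have hR' : ∀ z, star (a s) * (a s * z) = z - a s * (star (a s) * z) := fun z => by
    rw [← mul_assoc, hR, sub_mul, one_mul, mul_assoc]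
  simp [carU, mul_sub, sub_mul, mul_assoc, hA, hR, hR']

lemma star_a_mul_U (hone : ∀ j, star (a j) * a j + a j * star (a j) = 1)
    (hanti : ∀ j k, a j * a k + a k * a j = 0) (s : ℕ) :
    star (a s) * carU a s = star (a s) := by
  have hR : star (a s) * a s = 1 - a s * star (a s) := eq_sub_of_add_eq (hone s)
  have hS : ∀ z, star (a s) * (star (a s) * z) = 0 := fun z => by
    rw [← mul_assoc, car_star_sq_zero a hanti s, zero_mul]
  have hR' : ∀ z, star (a s) * (a s * z) = z - a s * (star (a s) * z) := fun z => by
    rw [← mul_assoc, hR, sub_mul, one_mul, mul_assoc]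
  simp [carU, mul_sub, sub_mul, mul_assoc, hS, hR, hR', car_star_sq_zero a hanti s]

lemma aa_mul_U_pow (hone : ∀ j, star (a j) * a j + a j * star (a j) = 1)
    (hanti : ∀ j k, a j * a k + a k * a j = 0) (s n : ℕ) :
    (a s * star (a s)) * carU a s ^ n = a s * star (a s) := by
  induction n with
  | zero => simp
  | succ m ih => rw [pow_succ, ← mul_assoc, ih, aa_mul_U a hone hanti]

lemma a_mul_U_pow (hone : ∀ j, star (a j) * a j + a j * star (a j) = 1)
    (hanti : ∀ j k, a j * a k + a k * a j = 0) (s n : ℕ) :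
    a s * carU a s ^ n = ((-1 : ℂ) ^ n) • a s := by
  induction n with
  | zero => simp
  | succ m ih =>
    rw [pow_succ, ← mul_assoc, ih, smul_mul_assoc, a_mul_U a hone hanti, pow_succ]
    simp [smul_smul]

lemma star_a_mul_U_pow (hone : ∀ j, star (a j) * a j + a j * star (a j) = 1)
    (hanti : ∀ j k, a j * a k + a k * a j = 0) (s n : ℕ) :
    star (a s) * carU a s ^ n = star (a s) := by
  induction n with
  | zero => simp
  | succ m ih => rw [pow_succ, ← mul_assoc, ih, star_a_mul_U a hone hanti]

/-- The interchange lemma: if each `g s` commutes with every `f t` at another site,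
products can be merged sitewise. -/
lemma prod_mul_prod_of_commute (f g : ℕ → A)
    (hfg : ∀ s t : ℕ, s ≠ t → Commute (g s) (f t)) (l : ℕ) :
    (List.ofFn fun s : Fin l => f s).prod * (List.ofFn fun s : Fin l => g s).prod
      = (List.ofFn fun s : Fin l => f s * g s).prod := by
  induction l with
  | zero => simp
  | succ m ih =>
    rw [List.ofFn_succ' fun s : Fin (m+1) => f s,
      List.ofFn_succ' fun s : Fin (m+1) => g s,
      List.ofFn_succ' fun s : Fin (m+1) => f s * g s,
      List.prod_concat, List.prod_concat, List.prod_concat]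
    simp only [Fin.coe_castSucc, Fin.val_last]
    have hc : Commute (f m) ((List.ofFn fun s : Fin m => g (s : ℕ)).prod) := by
      apply Commute.list_prod_right
      intro x hx
      rw [List.mem_ofFn] at hx
      obtain ⟨s, rfl⟩ := hx
      exact (hfg s m (by omega)).symm
    calc (List.ofFn fun s : Fin m => f (s : ℕ)).prod * f m *
          ((List.ofFn fun s : Fin m => g (s : ℕ)).prod * g m)
        = (List.ofFn fun s : Fin m => f (s : ℕ)).prod *
            (f m * (List.ofFn fun s : Fin m => g (s : ℕ)).prod) * g m := by
          rw [mul_assoc, mul_assoc, mul_assoc]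
      _ = (List.ofFn fun s : Fin m => f (s : ℕ)).prod *
            ((List.ofFn fun s : Fin m => g (s : ℕ)).prod * f m) * g m := by rw [hc.eq]
      _ = ((List.ofFn fun s : Fin m => f (s : ℕ)).prod *
            (List.ofFn fun s : Fin m => g (s : ℕ)).prod) * (f m * g m) := by
          rw [← mul_assoc, mul_assoc _ (f m) (g m)]
      _ = _ := by rw [ih]

lemma carN_succ_lt (i j : ℕ → Fin 2) {s l : ℕ} (h : s < l) :
    carN i j s (l + 1) = if i l = j l then carN i j s l else carN i j s l + 1 := by
  unfold carN
  have hio : Finset.Ioo s (l + 1) = Finset.Ioc s l := by ext x; simp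
  rw [hio, ← Finset.Ioo_insert_right h, Finset.filter_insert]
  by_cases hd : i l = j l
  · rw [if_neg (by simpa using hd), if_pos hd]
  · rw [if_pos hd, if_neg hd, Finset.card_insert_of_notMem (by simp)]

lemma carN_self (i j : ℕ → Fin 2) (l : ℕ) : carN i j l (l + 1) = 0 := by
  unfold carN
  have hio : Finset.Ioo l (l + 1) = ∅ := by ext x; simp
  rw [hio]
  simp

/-- The Jordan–Klein–Wigner rearrangement: the product of matrix units equals the
sitewise-ordered product of local factors. -/
lemma car_rearrange (hmix : ∀ j k, j ≠ k → star (a j) * a k + a k * star (a j) = 0)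
    (hanti : ∀ j k, a j * a k + a k * a j = 0) (i j : ℕ → Fin 2) (l : ℕ) :
    (List.ofFn fun k : Fin l => carE a k (i k) (j k)).prod
      = (List.ofFn fun s : Fin l =>
          carX a s (i s) (j s) * carU a s ^ carN i j s l).prod := by
  induction l with
  | zero => simp
  | succ m ih =>
    rw [List.ofFn_succ' fun k : Fin (m+1) => carE a k (i k) (j k),
      List.ofFn_succ' fun s : Fin (m+1) => carX a s (i s) (j s) * carU a s ^ carN i j s (m+1),
      List.prod_concat, List.prod_concat]
    simp only [Fin.coe_castSucc, Fin.val_last]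
    rw [ih, carE_eq, carN_self, pow_zero, mul_one]
    by_cases h : i m = j m
    · rw [if_pos h, one_mul]
      have hfun : ∀ s : Fin m, carN i j (s : ℕ) (m + 1) = carN i j (s : ℕ) m :=
        fun s => by rw [carN_succ_lt i j s.2, if_pos h]
      simp only [hfun]
    · rw [if_neg h, carV_eq_prod, ← mul_assoc,
        prod_mul_prod_of_commute (fun s => carX a s (i s) (j s) * carU a s ^ carN i j s m)
          (carU a) (fun s t hst => commute_U_Z a hmix hanti hst (i t) (j t) (carN i j t m)) m]
      have hfun : ∀ s : Fin m,
          carX a (s : ℕ) (i s) (j s) * carU a (s : ℕ) ^ carN i j (s : ℕ) m * carU a (s : ℕ)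
            = carX a (s : ℕ) (i s) (j s) * carU a (s : ℕ) ^ carN i j (s : ℕ) (m + 1) :=
        fun s => by rw [mul_assoc, ← pow_succ, carN_succ_lt i j s.2, if_neg h]
      simp only [hfun]

end CARAux

lemma car_mem_closure {A : Type*}
    [NormedRing A] [StarRing A] [CStarRing A] [NormedAlgebra ℂ A] [StarModule ℂ A]
    [CompleteSpace A] (a : ℕ → A) (s : ℕ) (k l : Fin 2) (n : ℕ) :
    carX a s k l * carU a s ^ n ∈
      (StarAlgebra.adjoin ℂ ({a s} : Set A)).topologicalClosure := by
  apply StarSubalgebra.le_topologicalClosure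
  have h0 : a s ∈ StarAlgebra.adjoin ℂ ({a s} : Set A) :=
    StarAlgebra.subset_adjoin ℂ _ rfl
  have h1 : star (a s) ∈ StarAlgebra.adjoin ℂ ({a s} : Set A) := star_mem h0
  have hU : carU a s ∈ StarAlgebra.adjoin ℂ ({a s} : Set A) :=
    sub_mem (mul_mem h0 h1) (mul_mem h1 h0)
  refine mul_mem ?_ (pow_mem hU n)
  fin_cases k <;> fin_cases l <;> simp only [carX] <;> simp <;>
    first
      | exact mul_mem h0 h1
      | exact h0
      | exact h1
      | exact mul_mem h1 h0

/-- Let `φ` be an even product state on the CAR algebra over the positive integers with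
`φ(a_j·a_j*) = μ ∈ [0,1]` for every site `j`.  Then on the Jordan–Klein–Wigner matrix
units localized in the first `l` sites,
`φ(e_{i₁j₁}(1)⋯e_{i_l j_l}(l)) = (∏ₖ δ_{iₖjₖ}) · μ^{#{k : iₖ = 1}} · (1−μ)^{#{k : iₖ = 2}}`. -/
theorem even_product_state_on_matrix_units {A : Type*}
    [NormedRing A] [StarRing A] [CStarRing A] [NormedAlgebra ℂ A] [StarModule ℂ A]
    [CompleteSpace A]
    (a : ℕ → A) (ha : IsCARFamily a)
    (Θ : A ≃⋆ₐ[ℂ] A) (hΘ : ∀ j : ℕ, Θ (a j) = -(a j))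
    (φ : A →ₗ[ℂ] ℂ) (hφ : IsState φ)
    (heven : ∀ x : A, φ (Θ x) = φ x)
    (hprod : IsProductState a φ)
    (μ : ℝ) (hμ : μ ∈ Set.Icc (0 : ℝ) 1)
    (hval : ∀ j : ℕ, φ (a j * star (a j)) = (μ : ℂ))
    (l : ℕ) (hl : 1 ≤ l) (i j : Fin l → Fin 2) :
    φ (List.ofFn fun k : Fin l => carE a k (i k) (j k)).prod =
      (∏ k : Fin l, if i k = j k then (1 : ℂ) else 0) *
        (μ : ℂ) ^ (Finset.univ.filter fun k : Fin l => i k = 0).card *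
        ((1 : ℂ) - (μ : ℂ)) ^ (Finset.univ.filter fun k : Fin l => i k = 1).card := by
  obtain ⟨hone, hmix, hanti, -⟩ := ha
  -- extend the index functions to all of ℕ
  set i' : ℕ → Fin 2 := fun n => if h : n < l then i ⟨n, h⟩ else 0 with hi'
  set j' : ℕ → Fin 2 := fun n => if h : n < l then j ⟨n, h⟩ else 0 with hj'
  have hi'k : ∀ k : Fin l, i' (k : ℕ) = i k := fun k => by
    simp only [hi', k.2, dif_pos, Fin.eta]
  have hj'k : ∀ k : Fin l, j' (k : ℕ) = j k := fun k => by
    simp only [hj', k.2, dif_pos, Fin.eta]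
  have hEe : (fun k : Fin l => carE a k (i k) (j k))
      = fun k : Fin l => carE a k (i' k) (j' k) := by
    funext k; rw [hi'k, hj'k]
  rw [hEe, car_rearrange a hmix hanti i' j' l]
  -- apply the product state property
  have hps := hprod l (fun k : Fin l => (k : ℕ)) Fin.val_injective
    (fun k : Fin l => carX a k (i' k) (j' k) * carU a k ^ carN i' j' k l)
    (fun k => car_mem_closure a k (i' k) (j' k) (carN i' j' k l))
  rw [hps]
  -- basic values of the state
  have hφa : ∀ s : ℕ, φ (a s) = 0 := by
    intro s
    have h := heven (a s)
    rw [hΘ s, map_neg] at h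
    linear_combination (-1/2 : ℂ) * h
  have hφsa : ∀ s : ℕ, φ (star (a s)) = 0 := by
    intro s
    have h := heven (star (a s))
    rw [map_star, hΘ s, star_neg, map_neg] at h
    linear_combination (-1/2 : ℂ) * h
  have hφ11 : ∀ s : ℕ, φ (star (a s) * a s) = 1 - (μ : ℂ) := by
    intro s
    have h2 : φ (star (a s) * a s) + φ (a s * star (a s)) = 1 := by
      rw [← map_add, hone s, hφ.1]
    rw [hval s] at h2
    linear_combination h2
  by_cases hall : ∀ k : Fin l, i k = j k
  · -- diagonal case
    have hN : ∀ k : Fin l, carN i' j' (k : ℕ) l = 0 := by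
      intro k
      unfold carN
      rw [Finset.card_eq_zero, Finset.filter_eq_empty_iff]
      intro x hx
      rw [Finset.mem_Ioo] at hx
      simp only [hi', hj', hx.2, dif_pos, ne_eq, not_not]
      exact hall ⟨x, hx.2⟩
    have hterm : ∀ k : Fin l,
        φ (carX a k (i' k) (j' k) * carU a k ^ carN i' j' k l)
          = if i k = 0 then (μ : ℂ) else 1 - (μ : ℂ) := by
      intro k
      rw [hN k, pow_zero, mul_one, hi'k, hj'k, ← hall k]
      by_cases h0 : i k = 0
      · rw [if_pos h0, h0]
        simpa [carX] using hval (k : ℕ)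
      · have h1 : i k = 1 := by omega
        rw [if_neg h0, h1]
        simpa [carX] using hφ11 (k : ℕ)
      
    calc (∏ k : Fin l, φ (carX a k (i' k) (j' k) * carU a k ^ carN i' j' k l))
        = ∏ k : Fin l, (if i k = 0 then (μ : ℂ) else 1 - (μ : ℂ)) :=
          Finset.prod_congr rfl fun k _ => hterm k
      _ = _ := by
          rw [Finset.prod_ite (fun _ => (μ : ℂ)) (fun _ => 1 - (μ : ℂ)),
            Finset.prod_const, Finset.prod_const]
          have hδ : (∏ k : Fin l, if i k = j k then (1 : ℂ) else 0) = 1 :=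
            Finset.prod_eq_one fun k _ => if_pos (hall k)
          rw [hδ, one_mul]
          have hfil : Finset.filter (fun x : Fin l => ¬ i x = 0) Finset.univ
              = Finset.filter (fun k : Fin l => i k = 1) Finset.univ :=
            Finset.filter_congr fun k _ => by constructor <;> intro h <;> omega
          rw [hfil]
  · -- off-diagonal case: both sides vanish
    push_neg at hall
    obtain ⟨k0, hk0⟩ := hall
    have hδ : (∏ k : Fin l, if i k = j k then (1 : ℂ) else 0) = 0 :=
      Finset.prod_eq_zero (Finset.mem_univ k0) (if_neg hk0)
    rw [hδ, zero_mul, zero_mul]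
    apply Finset.prod_eq_zero (Finset.mem_univ k0)
    show φ (carX a (k0 : ℕ) (i' k0) (j' k0) * carU a k0 ^ carN i' j' k0 l) = 0
    rw [hi'k, hj'k]
    by_cases h0 : i k0 = 0
    · have h1 : j k0 = 1 := by omega
      rw [h0, h1]
      have : carX a (k0 : ℕ) 0 1 = a (k0 : ℕ) := by simp [carX]
      rw [this, a_mul_U_pow a hone hanti, map_smul, hφa, smul_zero]
    · have h0' : i k0 = 1 := by omega
      have h1 : j k0 = 0 := by omega
      rw [h0', h1]
      have : carX a (k0 : ℕ) 1 0 = star (a (k0 : ℕ)) := by simp [carX]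
      rw [this, star_a_mul_U_pow a hone hanti, hφsa]
end
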